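/- Let F_1(z) = ∑_{n≥1} (∑_{T: |T|=n} R(T)) z^n, the sum over all full binary trees T with n nodes, and let ρ_1 be the radius of convergence of F_1. Then ρ_1 = √(2√3 − 3)/2 (approximately 0.340625), and ρ_1 satisfies the polynomial equation 16 ρ_1⁴ + 24 ρ_1² − 3 = 0. -/

import Mathlib

open scoped ENNReal NNReal

/-- Rooted ordered (plane) trees: a tree is a root together with a linearly
ordered (finite) list of subtrees. -/
inductive PTree : Type where
  | node : List PTree → PTree

namespace PTree

/-- The list of subtrees rooted at the children of the root. -/
def children : PTree → List PTree
  | node ts => ts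

mutual
  /-- The number of nodes of a tree. -/
  def size : PTree → ℕ
    | node ts => 1 + sizeList ts
  def sizeList : List PTree → ℕ
    | [] => 0
    | t :: ts => size t + sizeList ts
end

/-- The subtree rooted at a given address (a path from the root, recorded as the
list of child indices), if it exists. -/
def subtreeAt : List ℕ → PTree → Option PTree
  | [], t => some t
  | i :: p, node ts => (ts[i]?).bind (subtreeAt p)

mutual
  /-- The list of addresses of all nodes of a tree. -/
  def nodesList : PTree → List (List ℕ)
    | node ts => [] :: nodesListAux 0 ts
  def nodesListAux : ℕ → List PTree → List (List ℕ)
    | _, [] => []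
    | i, t :: ts => (nodesList t).map (i :: ·) ++ nodesListAux (i + 1) ts
end

/-- The set of nodes of a tree, represented by their addresses. -/
def nodes (T : PTree) : Finset (List ℕ) := (nodesList T).toFinset

/-- The fringe subtree `T_v` rooted at the node with address `v`
(junk value if `v` is not a node of `T`). -/
def fringe (T : PTree) (v : List ℕ) : PTree := (subtreeAt v T).getD (node [])

/-- The out-degree (number of children) of the node at address `v`. -/
def degreeAt (T : PTree) (v : List ℕ) : ℕ := (fringe T v).children.length

/-- `V` is the node set of a root subtree of `T`: a nonempty set of nodes containing
the root and closed under taking parents. -/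
def IsRootSub (T : PTree) (V : Finset (List ℕ)) : Prop :=
  (V : Set (List ℕ)) ⊆ (nodes T : Set (List ℕ)) ∧ [] ∈ V ∧
    ∀ v ∈ V, v ≠ [] → v.dropLast ∈ V

/-- `V` is the node set of a (general) subtree of `T`: a nonempty set of nodes
inducing a connected subgraph, i.e. having a minimal node `r` such that `V` contains
every node on the path from `r` to any of its elements. -/
def IsSub (T : PTree) (V : Finset (List ℕ)) : Prop :=
  (V : Set (List ℕ)) ⊆ (nodes T : Set (List ℕ)) ∧ V.Nonempty ∧
    ∃ r ∈ V, ∀ v ∈ V, r <+: v ∧ ∀ w : List ℕ, r <+: w → w <+: v → w ∈ V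

/-- `R T` : the number of root subtrees of `T`. -/
noncomputable def R (T : PTree) : ℕ := {V : Finset (List ℕ) | IsRootSub T V}.ncard

/-- `S T` : the number of (general) subtrees of `T`. -/
noncomputable def S (T : PTree) : ℕ := {V : Finset (List ℕ) | IsSub T V}.ncard

/-- `π(u,v)`: the product of `d(w)⁻¹` over the nodes `w` on the path
from `u` to `v`, excluding `v` itself (`u` is assumed to be an ancestor of `v`). -/
noncomputable def pathProd (T : PTree) (u v : List ℕ) : ℝ :=
  ∏ j ∈ Finset.Ico u.length v.length, ((degreeAt T (v.take j) : ℝ))⁻¹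

/-- `η(v) = ∑_{u ⪯ v} π(u,v)`, the sum over all ancestors `u` of `v` (including `v`). -/
noncomputable def eta (T : PTree) (v : List ℕ) : ℝ :=
  ∑ j ∈ Finset.range (v.length + 1), pathProd T (v.take j) v

/-- `ζ(T) = ∑_{w ∈ T} π(o,w)` where `o` is the root. -/
noncomputable def zeta (T : PTree) : ℝ := ∑ v ∈ nodes T, pathProd T [] v

/-- The weight `w(T) = ∏_{v ∈ T} w_{d(v)}` of a tree, for a weight sequence `w`. -/
noncomputable def weight (w : ℕ → ℝ) (T : PTree) : ℝ := ∏ v ∈ nodes T, w (degreeAt T v)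

open Classical in
/-- `∑_{|T| = n} w(T) f(T)`, the sum over all rooted ordered trees of size `n`. -/
noncomputable def treeSum (w : ℕ → ℝ) (n : ℕ) (f : PTree → ℝ) : ℝ :=
  ∑' T : PTree, if size T = n then weight w T * f T else 0

/-- The partition function `Z_n = ∑_{|T| = n} w(T)`. -/
noncomputable def Z (w : ℕ → ℝ) (n : ℕ) : ℝ := treeSum w n fun _ => 1

/-- The expectation `E f(𝒯_n)` for the random tree `𝒯_n` of size `n` chosen with
probability proportional to its weight. -/
noncomputable def expect (w : ℕ → ℝ) (n : ℕ) (f : PTree → ℝ) : ℝ := treeSum w n f / Z w n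

open Classical in
/-- The probability `P(𝒯_n ∈ P)` for the random tree `𝒯_n` of size `n`. -/
noncomputable def prob (w : ℕ → ℝ) (n : ℕ) (P : PTree → Prop) : ℝ :=
  expect w n fun T => if P T then 1 else 0

/-- The variance `Var f(𝒯_n)`. -/
noncomputable def varOf (w : ℕ → ℝ) (n : ℕ) (f : PTree → ℝ) : ℝ :=
  expect w n (fun T => f T ^ 2) - (expect w n f) ^ 2

/-- The filter of admissible sizes `n → ∞`: those `n` for which trees of size `n`
have positive total weight (i.e. `𝒯_n` is defined). -/
noncomputable def admissibleFilter (w : ℕ → ℝ) : Filter ℕ :=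
  Filter.atTop ⊓ Filter.principal {n | 0 < Z w n}

/-- The number of root subtrees of `T` whose number of nodes satisfies `p`. -/
noncomputable def rootSubCount (T : PTree) (p : ℕ → Prop) : ℕ :=
  {V : Finset (List ℕ) | IsRootSub T V ∧ p V.card}.ncard

/-- `∑_{T' ⊆_r T} |T'|^r`, the sum of the `r`-th powers of the sizes of all
root subtrees of `T`. -/
noncomputable def rootSubSizePow (T : PTree) (r : ℕ) : ℝ :=
  ∑' V : {V : Finset (List ℕ) // IsRootSub T V}, ((V.1.card : ℝ)) ^ r

/-- A full binary tree: every node has exactly 0 or 2 children. -/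
def FullBinary (T : PTree) : Prop := ∀ v ∈ nodes T, degreeAt T v = 0 ∨ degreeAt T v = 2

/-- Replace the fringe subtree of `T` at address `v` by `T'`. -/
def replaceAt : List ℕ → PTree → PTree → PTree
  | [], _, t' => t'
  | i :: p, node ts, t' => node (ts.set i (replaceAt p (ts.getD i (node [])) t'))

end PTree

/-- The generator `Φ(x) = ∑_{i ≥ 0} w_i x^i`. -/
noncomputable def Phi (w : ℕ → ℝ) (x : ℝ) : ℝ := ∑' i : ℕ, w i * x ^ i

/-- The derivative `Φ'(x) = ∑_{i ≥ 1} i w_i x^{i-1}` of the generator. -/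
noncomputable def PhiD (w : ℕ → ℝ) (x : ℝ) : ℝ :=
  ∑' i : ℕ, ((i + 1 : ℕ) : ℝ) * w (i + 1) * x ^ i

/-- The second derivative `Φ''(x)` of the generator. -/
noncomputable def PhiDD (w : ℕ → ℝ) (x : ℝ) : ℝ :=
  ∑' i : ℕ, ((i + 2 : ℕ) : ℝ) * ((i + 1 : ℕ) : ℝ) * w (i + 2) * x ^ i

/-- The filter describing `z ↑ R` for `R ∈ (0,∞]` the radius of convergence:
`z → R⁻` if `R < ∞`, and `z → ∞` if `R = ∞`. -/
noncomputable def leftLim (Rr : ℝ≥0∞) : Filter ℝ :=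
  if Rr = ⊤ then Filter.atTop else nhdsWithin Rr.toReal (Set.Iio Rr.toReal)

/-- The cumulative distribution function of the centered normal distribution `N(0, v)`. -/
noncomputable def gaussCDF (v : ℝ≥0) (x : ℝ) : ℝ :=
  ((ProbabilityTheory.gaussianReal 0 v) (Set.Iic x)).toReal

/-- The weighted generating function `F_k(z) = ∑_T w(T) R(T)^k z^{|T|}`. -/
noncomputable def Fgen (w : ℕ → ℝ) (k : ℕ) (z : ℝ) : ℝ :=
  ∑' T : PTree, PTree.weight w T * (PTree.R T : ℝ) ^ k * z ^ PTree.size T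

/-- The mixed generating function `G_{m,ℓ}(z) = ∑_T w(T) S(T)^m R(T)^ℓ z^{|T|}`. -/
noncomputable def Ggen (w : ℕ → ℝ) (m ℓ : ℕ) (z : ℝ) : ℝ :=
  ∑' T : PTree, PTree.weight w T * (PTree.S T : ℝ) ^ m * (PTree.R T : ℝ) ^ ℓ * z ^ PTree.size T

/-- The radius of convergence `ρ_k` of `F_k`. -/
noncomputable def rhoGen (w : ℕ → ℝ) (k : ℕ) : ℝ :=
  sSup {x : ℝ | 0 ≤ x ∧
    Summable fun T : PTree => PTree.weight w T * (PTree.R T : ℝ) ^ k * x ^ PTree.size T}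

/-- `F̂_k(z) = ∑_{j=0}^k C(k,j) F_j(z)`. -/
noncomputable def Fhat (w : ℕ → ℝ) (k : ℕ) (z : ℝ) : ℝ :=
  ∑ j ∈ Finset.range (k + 1), (k.choose j : ℝ) * Fgen w j z


open Classical in
/-- The number of good nodes of `T`: nodes `v` whose fringe subtree has exactly
`3ℓ+1` nodes and with `η(v) ≤ A`. -/
noncomputable def PTree.goodCount (A : ℝ) (ℓ : ℕ) (T : PTree) : ℕ :=
  ((PTree.nodes T).filter fun v =>
    PTree.size (PTree.fringe T v) = 3 * ℓ + 1 ∧ PTree.eta T v ≤ A).card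

open Classical in
/-- `∑_{T full binary, |T| = n} R(T)^m`, the coefficient of `z^n` in `F_m(z)`
for full binary trees. -/
noncomputable def binRCoeff (m n : ℕ) : ℝ :=
  ∑' T : PTree, if PTree.size T = n ∧ PTree.FullBinary T then (PTree.R T : ℝ) ^ m else 0

/-- The formal power series `F_m(z) = ∑_n (∑_{T full binary, |T| = n} R(T)^m) z^n`. -/
noncomputable def binF (m : ℕ) : PowerSeries ℝ := PowerSeries.mk fun n => binRCoeff m n

/-- `ρ_1`, the radius of convergence of `F_1(z) = ∑_n (∑_{T full binary, |T| = n} R(T)) z^n`. -/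
noncomputable def binRho1 : ℝ :=
  sSup {x : ℝ | 0 ≤ x ∧ Summable fun n : ℕ => binRCoeff 1 n * x ^ n}

namespace PTree

noncomputable instance : DecidableEq PTree := Classical.decEq _

theorem one_le_size (T : PTree) : 1 ≤ size T := by
  cases T with | node ts => rw [size]; omega

theorem size_node2 (L R : PTree) : size (node [L, R]) = 1 + size L + size R := by
  rw [size, sizeList, sizeList, sizeList]; ring

theorem size_leaf : size (node []) = 1 := by rw [size, sizeList]

theorem nodesList_node2 (L R : PTree) :
    nodesList (node [L, R]) =
      [] :: ((nodesList L).map (0 :: ·) ++ ((nodesList R).map (1 :: ·) ++ [])) := by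
  rw [nodesList, nodesListAux, nodesListAux, nodesListAux]

theorem mem_nodes_node2 {L R : PTree} {v : List ℕ} :
    v ∈ nodes (node [L, R]) ↔
      v = [] ∨ (∃ p ∈ nodes L, v = 0 :: p) ∨ (∃ p ∈ nodes R, v = 1 :: p) := by
  simp only [nodes, List.mem_toFinset, nodesList_node2, List.mem_cons, List.append_nil,
    List.mem_append, List.mem_map]
  constructor
  · rintro (h | ⟨p, hp, rfl⟩ | ⟨p, hp, rfl⟩)
    · exact Or.inl h
    · exact Or.inr (Or.inl ⟨p, hp, rfl⟩)
    · exact Or.inr (Or.inr ⟨p, hp, rfl⟩)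
  · rintro (h | ⟨p, hp, rfl⟩ | ⟨p, hp, rfl⟩)
    · exact Or.inl h
    · exact Or.inr (Or.inl ⟨p, hp, rfl⟩)
    · exact Or.inr (Or.inr ⟨p, hp, rfl⟩)

theorem nodes_leaf : nodes (node []) = {[]} := by
  rw [nodes, nodesList, nodesListAux]; rfl

theorem mem_nodes_root (T : PTree) : ([] : List ℕ) ∈ nodes T := by
  cases T with | node ts =>
  rw [nodes, nodesList]; simp

theorem fringe_root (T : PTree) : fringe T [] = T := by rw [fringe, subtreeAt]; rfl

theorem degreeAt_root (ts : List PTree) : degreeAt (node ts) [] = ts.length := by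
  rw [degreeAt, fringe_root]; rfl

theorem fringe_node2_zero (L R : PTree) (p : List ℕ) :
    fringe (node [L, R]) (0 :: p) = fringe L p := by
  rw [fringe, fringe, subtreeAt]; rfl

theorem fringe_node2_one (L R : PTree) (p : List ℕ) :
    fringe (node [L, R]) (1 :: p) = fringe R p := by
  rw [fringe, fringe, subtreeAt]; rfl

theorem fullBinary_leaf : FullBinary (node []) := by
  intro v hv
  rw [nodes_leaf] at hv
  simp at hv
  subst hv
  left; rw [degreeAt_root]; rfl

theorem fullBinary_node2 {L R : PTree} :
    FullBinary (node [L, R]) ↔ FullBinary L ∧ FullBinary R := by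
  constructor
  · intro h
    constructor
    · intro v hv
      have := h (0 :: v) (mem_nodes_node2.2 (Or.inr (Or.inl ⟨v, hv, rfl⟩)))
      rwa [degreeAt, fringe_node2_zero, ← degreeAt] at this
    · intro v hv
      have := h (1 :: v) (mem_nodes_node2.2 (Or.inr (Or.inr ⟨v, hv, rfl⟩)))
      rwa [degreeAt, fringe_node2_one, ← degreeAt] at this
  · rintro ⟨hL, hR⟩ v hv
    rcases mem_nodes_node2.1 hv with rfl | ⟨p, hp, rfl⟩ | ⟨p, hp, rfl⟩
    · right; rw [degreeAt_root]; rfl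
    · rw [degreeAt, fringe_node2_zero, ← degreeAt]; exact hL p hp
    · rw [degreeAt, fringe_node2_one, ← degreeAt]; exact hR p hp

end PTree

namespace PTree

open Classical in
/-- The finset of root subtrees. -/
noncomputable def RS (T : PTree) : Finset (Finset (List ℕ)) :=
  (nodes T).powerset.filter (fun V => IsRootSub T V)

theorem mem_RS {T : PTree} {V : Finset (List ℕ)} : V ∈ RS T ↔ IsRootSub T V := by
  classical
  simp only [RS, Finset.mem_filter, Finset.mem_powerset, and_iff_right_iff_imp]
  intro h x hx
  exact h.1 hx

theorem R_eq_card (T : PTree) : R T = (RS T).card := by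
  rw [R]
  have : {V : Finset (List ℕ) | IsRootSub T V} = ↑(RS T) := by
    ext V; simp [mem_RS]
  rw [this, Set.ncard_coe_finset]

theorem empty_not_mem_RS (T : PTree) : ∅ ∉ RS T := by
  intro h
  exact Finset.notMem_empty _ (mem_RS.1 h).2.1

theorem RS_leaf : RS (node []) = {{([] : List ℕ)}} := by
  ext V
  simp only [mem_RS, Finset.mem_singleton]
  constructor
  · rintro ⟨hsub, hroot, -⟩
    have : V ⊆ {[]} := by
      intro v hv
      have := hsub hv
      rw [nodes_leaf] at this
      simpa using this
    rcases Finset.subset_singleton_iff.1 this with rfl | rfl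
    · exact absurd hroot (Finset.notMem_empty _)
    · rfl
  · rintro rfl
    refine ⟨?_, Finset.mem_singleton_self _, ?_⟩
    · rw [nodes_leaf]
    · intro v hv hne
      simp at hv
      exact absurd hv hne

theorem R_leaf : R (node []) = 1 := by rw [R_eq_card, RS_leaf, Finset.card_singleton]

theorem dropLast_cons (i : ℕ) (p : List ℕ) :
    (i :: p).dropLast = if p = [] then [] else i :: p.dropLast := by
  cases p with
  | nil => rfl
  | cons a q => simp [List.dropLast_cons₂]

/-- helper: ancestor chain: if `i :: p ∈ V` and V is parent-closed then `[i] ∈ V`. -/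
theorem chain_mem {V : Finset (List ℕ)}
    (hcl : ∀ v ∈ V, v ≠ [] → v.dropLast ∈ V) :
    ∀ n (p : List ℕ), p.length ≤ n → ∀ i, i :: p ∈ V → [i] ∈ V := by
  intro n
  induction n with
  | zero =>
    intro p hp i h
    have hp0 : p = [] := List.eq_nil_of_length_eq_zero (by omega)
    subst hp0; exact h
  | succ n ih =>
    intro p hp i h
    cases eq_or_ne p [] with
    | inl he => subst he; exact h
    | inr hne =>
      have := hcl _ h (by simp)
      rw [dropLast_cons, if_neg hne] at this
      exact ih p.dropLast (by rw [List.length_dropLast]; omega) i this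

open Classical in
noncomputable def glue (W : Finset (List ℕ) × Finset (List ℕ)) : Finset (List ℕ) :=
  insert [] ((W.1.image (0 :: ·)) ∪ (W.2.image (1 :: ·)))

theorem mem_glue {W : Finset (List ℕ) × Finset (List ℕ)} {v : List ℕ} :
    v ∈ glue W ↔ v = [] ∨ (∃ p ∈ W.1, v = 0 :: p) ∨ (∃ p ∈ W.2, v = 1 :: p) := by
  classical
  simp only [glue, Finset.mem_insert, Finset.mem_union, Finset.mem_image]
  aesop

theorem glue_left {W : Finset (List ℕ) × Finset (List ℕ)} {p : List ℕ} :
    0 :: p ∈ glue W ↔ p ∈ W.1 := by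
  rw [mem_glue]
  constructor
  · rintro (h | ⟨q, hq, h⟩ | ⟨q, hq, h⟩) <;> simp_all
  · intro h; exact Or.inr (Or.inl ⟨p, h, rfl⟩)

theorem glue_right {W : Finset (List ℕ) × Finset (List ℕ)} {p : List ℕ} :
    1 :: p ∈ glue W ↔ p ∈ W.2 := by
  rw [mem_glue]
  constructor
  · rintro (h | ⟨q, hq, h⟩ | ⟨q, hq, h⟩) <;> simp_all
  · intro h; exact Or.inr (Or.inr ⟨p, h, rfl⟩)

open Classical in
theorem RS_node2 (L Rt : PTree) :
    RS (node [L, Rt]) = ((insert ∅ (RS L)) ×ˢ (insert ∅ (RS Rt))).image glue := by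
  classical
  ext V
  simp only [Finset.mem_image, Finset.mem_product]
  constructor
  · intro hV
    obtain ⟨hsub, hroot, hcl⟩ := mem_RS.1 hV
    have hmem : ∀ (i : ℕ) (p : List ℕ),
        p ∈ (V.filter (fun v => v.head? = some i)).image List.tail ↔ i :: p ∈ V := by
      intro i p
      simp only [Finset.mem_image, Finset.mem_filter]
      constructor
      · rintro ⟨v, ⟨hvV, hh⟩, ht⟩
        cases v with
        | nil => simp at hh
        | cons a q =>
          simp only [List.head?_cons, Option.some.injEq] at hh
          simp only [List.tail_cons] at ht
          rw [hh, ht] at hvV; exact hvV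
      · intro h
        exact ⟨i :: p, ⟨h, rfl⟩, rfl⟩
    have hcase : ∀ v ∈ V, v = [] ∨ (∃ p ∈ nodes L, v = 0 :: p) ∨ (∃ p ∈ nodes Rt, v = 1 :: p) :=
      fun v hv => mem_nodes_node2.1 (hsub hv)
    have hW : ∀ (i : ℕ), (V.filter (fun v => v.head? = some i)).image List.tail ≠ ∅ →
        ∀ p ∈ (V.filter (fun v => v.head? = some i)).image List.tail, i :: p ∈ V := by
      intro i _ p hp; exact (hmem i p).1 hp
    refine ⟨((V.filter (fun v => v.head? = some 0)).image List.tail,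
             (V.filter (fun v => v.head? = some 1)).image List.tail), ⟨?_, ?_⟩, ?_⟩
    · rcases eq_or_ne ((V.filter (fun v => v.head? = some 0)).image List.tail) ∅ with he | hne
      · rw [he]; exact Finset.mem_insert_self _ _
      · refine Finset.mem_insert.2 (Or.inr (mem_RS.2 ⟨?_, ?_, ?_⟩))
        · intro p hp
          have h0 : (0 : ℕ) :: p ∈ V := (hmem 0 p).1 hp
          rcases hcase _ h0 with h | ⟨q, hq, hh⟩ | ⟨q, hq, hh⟩
          · simp at h
          · simp only [List.cons.injEq] at hh
            rw [hh.2]; exact hq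
          · simp at hh
        · obtain ⟨p, hp⟩ := Finset.nonempty_of_ne_empty hne
          have h0 : (0 : ℕ) :: p ∈ V := (hmem 0 p).1 hp
          exact (hmem 0 []).2 (chain_mem hcl p.length p le_rfl 0 h0)
        · intro p hp hne'
          have h0 : (0 : ℕ) :: p ∈ V := (hmem 0 p).1 hp
          have := hcl _ h0 (by simp)
          rw [dropLast_cons, if_neg hne'] at this
          exact (hmem 0 p.dropLast).2 this
    · rcases eq_or_ne ((V.filter (fun v => v.head? = some 1)).image List.tail) ∅ with he | hne
      · rw [he]; exact Finset.mem_insert_self _ _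
      · refine Finset.mem_insert.2 (Or.inr (mem_RS.2 ⟨?_, ?_, ?_⟩))
        · intro p hp
          have h0 : (1 : ℕ) :: p ∈ V := (hmem 1 p).1 hp
          rcases hcase _ h0 with h | ⟨q, hq, hh⟩ | ⟨q, hq, hh⟩
          · simp at h
          · simp at hh
          · simp only [List.cons.injEq] at hh
            rw [hh.2]; exact hq
        · obtain ⟨p, hp⟩ := Finset.nonempty_of_ne_empty hne
          have h0 : (1 : ℕ) :: p ∈ V := (hmem 1 p).1 hp
          exact (hmem 1 []).2 (chain_mem hcl p.length p le_rfl 1 h0)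
        · intro p hp hne'
          have h0 : (1 : ℕ) :: p ∈ V := (hmem 1 p).1 hp
          have := hcl _ h0 (by simp)
          rw [dropLast_cons, if_neg hne'] at this
          exact (hmem 1 p.dropLast).2 this
    · ext v
      rw [mem_glue]
      constructor
      · rintro (rfl | ⟨p, hp, rfl⟩ | ⟨p, hp, rfl⟩)
        · exact hroot
        · exact (hmem 0 p).1 hp
        · exact (hmem 1 p).1 hp
      · intro hv
        rcases hcase _ hv with rfl | ⟨q, _, rfl⟩ | ⟨q, _, rfl⟩
        · exact Or.inl rfl
        · exact Or.inr (Or.inl ⟨q, (hmem 0 q).2 hv, rfl⟩)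
        · exact Or.inr (Or.inr ⟨q, (hmem 1 q).2 hv, rfl⟩)
  · rintro ⟨W, ⟨hW1, hW2⟩, rfl⟩
    rw [mem_RS]
    refine ⟨?_, mem_glue.2 (Or.inl rfl), ?_⟩
    · intro v hv
      rcases mem_glue.1 (by simpa using hv) with rfl | ⟨p, hp, rfl⟩ | ⟨p, hp, rfl⟩
      · exact mem_nodes_root _
      · rcases Finset.mem_insert.1 hW1 with h0 | h1
        · exact absurd (h0 ▸ hp) (Finset.notMem_empty _)
        · exact mem_nodes_node2.2 (Or.inr (Or.inl ⟨p, (mem_RS.1 h1).1 hp, rfl⟩))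
      · rcases Finset.mem_insert.1 hW2 with h0 | h2
        · exact absurd (h0 ▸ hp) (Finset.notMem_empty _)
        · exact mem_nodes_node2.2 (Or.inr (Or.inr ⟨p, (mem_RS.1 h2).1 hp, rfl⟩))
    · intro v hv hne
      rcases mem_glue.1 hv with rfl | ⟨p, hp, rfl⟩ | ⟨p, hp, rfl⟩
      · exact absurd rfl hne
      · rw [dropLast_cons]
        split
        · exact mem_glue.2 (Or.inl rfl)
        · rcases Finset.mem_insert.1 hW1 with h0 | h1
          · exact absurd (h0 ▸ hp) (Finset.notMem_empty _)
          · next hpne =>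
            exact glue_left.2 ((mem_RS.1 h1).2.2 p hp hpne)
      · rw [dropLast_cons]
        split
        · exact mem_glue.2 (Or.inl rfl)
        · rcases Finset.mem_insert.1 hW2 with h0 | h2
          · exact absurd (h0 ▸ hp) (Finset.notMem_empty _)
          · next hpne =>
            exact glue_right.2 ((mem_RS.1 h2).2.2 p hp hpne)

end PTree

namespace PTree

theorem glue_injective : Function.Injective glue := by
  intro W W' h
  have h1 : W.1 = W'.1 := by
    ext p
    rw [← glue_left (W := W), ← glue_left (W := W'), h]
  have h2 : W.2 = W'.2 := by
    ext p
    rw [← glue_right (W := W), ← glue_right (W := W'), h]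
  exact Prod.ext h1 h2

theorem R_node2 (L Rt : PTree) : R (node [L, Rt]) = (1 + R L) * (1 + R Rt) := by
  classical
  rw [R_eq_card, RS_node2, Finset.card_image_of_injective _ glue_injective,
    Finset.card_product, Finset.card_insert_of_notMem (empty_not_mem_RS L),
    Finset.card_insert_of_notMem (empty_not_mem_RS Rt), R_eq_card, R_eq_card]
  ring

theorem one_le_R (T : PTree) : 1 ≤ R T := by
  rw [R_eq_card]
  refine Finset.card_pos.2 ⟨{[]}, mem_RS.2 ⟨?_, Finset.mem_singleton_self _, ?_⟩⟩
  · intro v hv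
    simp only [Finset.coe_singleton, Set.mem_singleton_iff] at hv
    subst hv
    exact mem_nodes_root T
  · intro v hv hne
    simp only [Finset.mem_singleton] at hv
    exact absurd hv hne

end PTree

namespace PTree

noncomputable def FBT : ℕ → Finset PTree
  | 0 => ∅
  | 1 => {.node []}
  | (n+2) => (Finset.HasAntidiagonal.antidiagonal (n+1)).attach.biUnion
      (fun p => (FBT p.1.1 ×ˢ FBT p.1.2).image (fun q => .node [q.1, q.2]))
  decreasing_by
    all_goals
      have := p.2
      rw [Finset.HasAntidiagonal.mem_antidiagonal] at this
      omega

theorem sizeList_eq_zero {ts : List PTree} (h : sizeList ts = 0) : ts = [] := by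
  cases ts with
  | nil => rfl
  | cons t ts =>
    rw [sizeList] at h
    have := one_le_size t
    omega

theorem mem_FBT : ∀ (n : ℕ) (T : PTree), T ∈ FBT n ↔ size T = n ∧ FullBinary T := by
  intro n
  induction n using Nat.strong_induction_on with
  | _ n ih =>
    intro T
    match n with
    | 0 =>
      rw [FBT]
      simp only [Finset.notMem_empty, false_iff, not_and]
      intro h
      have := one_le_size T
      omega
    | 1 =>
      rw [FBT]
      simp only [Finset.mem_singleton]
      constructor
      · rintro rfl
        exact ⟨size_leaf, fullBinary_leaf⟩
      · rintro ⟨hs, hf⟩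
        cases T with
        | node ts =>
          rcases hf [] (mem_nodes_root _) with h | h <;> rw [degreeAt_root] at h
          · rw [List.length_eq_zero_iff] at h
            rw [h]
          · rw [size] at hs
            have hts : sizeList ts = 0 := by omega
            rw [sizeList_eq_zero hts] at h
            simp at h
    | n + 2 =>
      rw [FBT]
      simp only [Finset.mem_biUnion, Finset.mem_attach, true_and, Finset.mem_image,
        Finset.mem_product, Subtype.exists, Finset.HasAntidiagonal.mem_antidiagonal]
      constructor
      · rintro ⟨⟨i, j⟩, hij, ⟨⟨L, Rt⟩, ⟨hL, hR⟩, rfl⟩⟩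
        obtain ⟨hsL, hfL⟩ := (ih i (by omega) L).1 hL
        obtain ⟨hsR, hfR⟩ := (ih j (by omega) Rt).1 hR
        refine ⟨?_, fullBinary_node2.2 ⟨hfL, hfR⟩⟩
        rw [size_node2]
        simp only at hsL hsR ⊢
        omega
      · rintro ⟨hs, hf⟩
        cases T with
        | node ts =>
          rcases hf [] (mem_nodes_root _) with h | h <;> rw [degreeAt_root] at h
          · rw [List.length_eq_zero_iff] at h
            subst h
            rw [size_leaf] at hs
            omega
          · rw [List.length_eq_two] at h
            obtain ⟨L, Rt, rfl⟩ := h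
            rw [size_node2] at hs
            obtain ⟨hfL, hfR⟩ := fullBinary_node2.1 hf
            have h1 := one_le_size L
            have h2 := one_le_size Rt
            refine ⟨⟨size L, size Rt⟩, by omega, ⟨⟨L, Rt⟩, ⟨?_, ?_⟩, rfl⟩⟩
            · exact (ih (size L) (by omega) L).2 ⟨rfl, hfL⟩
            · exact (ih (size Rt) (by omega) Rt).2 ⟨rfl, hfR⟩

theorem sum_FBT_rec (n : ℕ) (f : PTree → ℝ) :
    ∑ T ∈ FBT (n + 2), f T =
      ∑ p ∈ Finset.HasAntidiagonal.antidiagonal (n + 1), ∑ L ∈ FBT p.1, ∑ Rt ∈ FBT p.2,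
        f (node [L, Rt]) := by
  classical
  rw [FBT]
  rw [Finset.sum_biUnion]
  · rw [← Finset.sum_attach (Finset.HasAntidiagonal.antidiagonal (n+1))
      (fun p => ∑ L ∈ FBT p.1, ∑ Rt ∈ FBT p.2, f (node [L, Rt]))]
    refine Finset.sum_congr rfl fun p _ => ?_
    rw [Finset.sum_image, Finset.sum_product]
    intro q hq q' hq' h
    simp only [node.injEq, List.cons.injEq, and_true] at h
    exact Prod.ext h.1 h.2
  · -- pairwise disjoint
    intro p _ q _ hpq
    simp only [Function.onFun]
    rw [Finset.disjoint_left]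
    rintro T hT hT'
    simp only [Finset.mem_image, Finset.mem_product] at hT hT'
    obtain ⟨⟨L, Rt⟩, ⟨hL, hR⟩, rfl⟩ := hT
    obtain ⟨⟨L', Rt'⟩, ⟨hL', hR'⟩, hEq⟩ := hT'
    simp only [node.injEq, List.cons.injEq, and_true] at hEq
    obtain ⟨h5, h6⟩ := hEq
    subst h5; subst h6
    apply hpq
    have h1 := ((mem_FBT _ _).1 hL).1
    have h2 := ((mem_FBT _ _).1 hL').1
    have h3 := ((mem_FBT _ _).1 hR).1
    have h4 := ((mem_FBT _ _).1 hR').1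
    have hp := p.2
    have hq := q.2
    rw [Finset.HasAntidiagonal.mem_antidiagonal] at hp hq
    apply Subtype.ext
    apply Prod.ext <;> omega

theorem binRCoeff_eq_sum (m n : ℕ) : binRCoeff m n = ∑ T ∈ FBT n, (R T : ℝ) ^ m := by
  classical
  rw [binRCoeff, tsum_eq_sum (s := FBT n) (f := fun T =>
      if size T = n ∧ FullBinary T then (R T : ℝ) ^ m else 0)]
  · refine Finset.sum_congr rfl fun T hT => ?_
    rw [if_pos ((mem_FBT n T).1 hT)]
  · intro T hT
    rw [if_neg (fun h => hT ((mem_FBT n T).2 h))]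

end PTree

namespace PTree

noncomputable def bS (n : ℕ) : ℝ := binRCoeff 0 n
noncomputable def aS (n : ℕ) : ℝ := binRCoeff 1 n
noncomputable def cS (n : ℕ) : ℝ := bS n + aS n

theorem FBT_zero : FBT 0 = ∅ := by rw [FBT]
theorem FBT_one : FBT 1 = {node []} := by rw [FBT]

theorem bS_zero : bS 0 = 0 := by rw [bS, binRCoeff_eq_sum, FBT_zero, Finset.sum_empty]
theorem aS_zero : aS 0 = 0 := by rw [aS, binRCoeff_eq_sum, FBT_zero, Finset.sum_empty]
theorem bS_one : bS 1 = 1 := by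
  rw [bS, binRCoeff_eq_sum, FBT_one, Finset.sum_singleton, pow_zero]
theorem aS_one : aS 1 = 1 := by
  rw [aS, binRCoeff_eq_sum, FBT_one, Finset.sum_singleton, R_leaf, pow_one, Nat.cast_one]
theorem cS_zero : cS 0 = 0 := by rw [cS, bS_zero, aS_zero]; ring
theorem cS_one : cS 1 = 2 := by rw [cS, bS_one, aS_one]; norm_num

theorem bS_nonneg (n : ℕ) : 0 ≤ bS n := by
  rw [bS, binRCoeff_eq_sum]
  exact Finset.sum_nonneg fun T _ => by positivity
theorem aS_nonneg (n : ℕ) : 0 ≤ aS n := by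
  rw [aS, binRCoeff_eq_sum]
  exact Finset.sum_nonneg fun T _ => by positivity
theorem cS_nonneg (n : ℕ) : 0 ≤ cS n := add_nonneg (bS_nonneg n) (aS_nonneg n)

theorem bS_le_aS (n : ℕ) : bS n ≤ aS n := by
  rw [bS, aS, binRCoeff_eq_sum, binRCoeff_eq_sum]
  refine Finset.sum_le_sum fun T _ => ?_
  rw [pow_zero, pow_one]
  exact_mod_cast one_le_R T

theorem cS_eq (n : ℕ) : cS n = ∑ T ∈ FBT n, ((1 : ℝ) + (R T : ℝ)) := by
  rw [cS, bS, aS, binRCoeff_eq_sum, binRCoeff_eq_sum, ← Finset.sum_add_distrib]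
  refine Finset.sum_congr rfl fun T _ => by rw [pow_zero, pow_one]

theorem bS_rec (n : ℕ) :
    bS (n + 2) = ∑ p ∈ Finset.HasAntidiagonal.antidiagonal (n + 1), bS p.1 * bS p.2 := by
  rw [bS, binRCoeff_eq_sum, sum_FBT_rec]
  refine Finset.sum_congr rfl fun p _ => ?_
  rw [bS, bS, binRCoeff_eq_sum, binRCoeff_eq_sum, Finset.sum_mul_sum]
  refine Finset.sum_congr rfl fun L _ => Finset.sum_congr rfl fun Rt _ => ?_
  simp

theorem aS_rec (n : ℕ) :
    aS (n + 2) = ∑ p ∈ Finset.HasAntidiagonal.antidiagonal (n + 1), cS p.1 * cS p.2 := by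
  rw [aS, binRCoeff_eq_sum, sum_FBT_rec]
  refine Finset.sum_congr rfl fun p _ => ?_
  rw [cS_eq, cS_eq, Finset.sum_mul_sum]
  refine Finset.sum_congr rfl fun L _ => Finset.sum_congr rfl fun Rt _ => ?_
  rw [pow_one, R_node2]
  push_cast
  ring

end PTree

namespace PTree

open Finset in
theorem conv_partial_le (f g : ℕ → ℝ) (hf : ∀ n, 0 ≤ f n) (hg : ∀ n, 0 ≤ g n) (M : ℕ) :
    ∑ m ∈ range M, ∑ p ∈ antidiagonal m, f p.1 * g p.2
      ≤ (∑ i ∈ range M, f i) * (∑ j ∈ range M, g j) := by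
  classical
  have hdisj : (range M : Set ℕ).PairwiseDisjoint (fun m => (antidiagonal m : Finset (ℕ × ℕ))) := by
    intro m _ m' _ hmm'
    simp only [Function.onFun]
    rw [Finset.disjoint_left]
    intro p hp hp'
    rw [Finset.HasAntidiagonal.mem_antidiagonal] at hp hp'
    exact hmm' (hp ▸ hp')
  rw [← Finset.sum_biUnion hdisj]
  calc ∑ p ∈ (range M).biUnion (fun m => antidiagonal m), f p.1 * g p.2
      ≤ ∑ p ∈ range M ×ˢ range M, f p.1 * g p.2 := by
        refine Finset.sum_le_sum_of_subset_of_nonneg ?_ (fun p _ _ => mul_nonneg (hf _) (hg _))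
        intro p hp
        simp only [Finset.mem_biUnion, mem_range, Finset.HasAntidiagonal.mem_antidiagonal] at hp
        obtain ⟨m, hm, hpm⟩ := hp
        simp only [Finset.mem_product, mem_range]
        omega
    _ = (∑ i ∈ range M, f i) * (∑ j ∈ range M, g j) := by
        rw [Finset.sum_product, Finset.sum_mul]
        exact Finset.sum_congr rfl fun i _ => by rw [Finset.mul_sum]

open Finset in
theorem quad_partial (u d : ℕ → ℝ) (hu0 : u 0 = 0) (hu1 : u 1 = 1)
    (hrec : ∀ k, u (k + 2) = ∑ p ∈ antidiagonal (k + 1), d p.1 * d p.2)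
    (hd : ∀ n, 0 ≤ d n) {x : ℝ} (hx : 0 ≤ x) (N : ℕ) :
    ∑ n ∈ range (N + 2), u n * x ^ n
      ≤ x + x * (∑ n ∈ range (N + 1), d n * x ^ n) ^ 2 := by
  rw [Finset.sum_range_succ' (fun n => u n * x ^ n) (N + 1),
    Finset.sum_range_succ' (fun n => u (n + 1) * x ^ (n + 1)) N]
  simp only [hu0, hu1, zero_mul, add_zero, pow_one, one_mul]
  have hterm : ∀ k, u (k + 2) * x ^ (k + 2) =
      x * ∑ p ∈ antidiagonal (k + 1), (d p.1 * x ^ p.1) * (d p.2 * x ^ p.2) := by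
    intro k
    rw [hrec, Finset.sum_mul, Finset.mul_sum]
    refine Finset.sum_congr rfl fun p hp => ?_
    rw [Finset.HasAntidiagonal.mem_antidiagonal] at hp
    rw [show k + 2 = p.1 + p.2 + 1 by omega, pow_succ, pow_add]
    ring
  have h1 : ∑ n ∈ range N, u (n + 1 + 1) * x ^ (n + 1 + 1)
      = x * ∑ k ∈ range N, ∑ p ∈ antidiagonal (k + 1), (d p.1 * x ^ p.1) * (d p.2 * x ^ p.2) := by
    rw [Finset.mul_sum]
    exact Finset.sum_congr rfl fun k _ => hterm k
  rw [h1]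
  have h2 : ∑ k ∈ range N, ∑ p ∈ antidiagonal (k + 1), (d p.1 * x ^ p.1) * (d p.2 * x ^ p.2)
      ≤ ∑ m ∈ range (N + 1), ∑ p ∈ antidiagonal m, (d p.1 * x ^ p.1) * (d p.2 * x ^ p.2) := by
    rw [Finset.sum_range_succ'
      (fun m => ∑ p ∈ antidiagonal m, (d p.1 * x ^ p.1) * (d p.2 * x ^ p.2)) N]
    have : 0 ≤ ∑ p ∈ antidiagonal 0, (d p.1 * x ^ p.1) * (d p.2 * x ^ p.2) :=
      Finset.sum_nonneg fun p _ =>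
        mul_nonneg (mul_nonneg (hd _) (pow_nonneg hx _)) (mul_nonneg (hd _) (pow_nonneg hx _))
    linarith
  have h3 := conv_partial_le (fun n => d n * x ^ n) (fun n => d n * x ^ n)
    (fun n => mul_nonneg (hd n) (pow_nonneg hx n))
    (fun n => mul_nonneg (hd n) (pow_nonneg hx n)) (N + 1)
  have h4 : ∑ n ∈ range N, u (n + 1 + 1) * x ^ (n + 1 + 1) ≤
      x * (∑ n ∈ range (N + 1), d n * x ^ n) ^ 2 := by
    rw [h1, sq]
    exact mul_le_mul_of_nonneg_left (le_trans h2 h3) hx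
  rw [h1] at h4
  have hx1 : x ^ (0 + 1) = x := by ring
  linarith

end PTree

namespace PTree

open Finset in
theorem partial_b {x β : ℝ} (hx : 0 ≤ x) (hβ : 0 ≤ β) (hfix : x + x * β ^ 2 ≤ β) :
    ∀ M, ∑ n ∈ range M, bS n * x ^ n ≤ β := by
  intro M
  induction M using Nat.strong_induction_on with
  | _ M ih =>
    match M with
    | 0 => simpa using hβ
    | 1 => simp [bS_zero, hβ]
    | N + 2 =>
      have h1 := quad_partial bS bS bS_zero bS_one bS_rec bS_nonneg hx N
      have h2 := ih (N + 1) (by omega)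
      have h3 : (0 : ℝ) ≤ ∑ n ∈ range (N + 1), bS n * x ^ n :=
        Finset.sum_nonneg fun n _ => mul_nonneg (bS_nonneg n) (pow_nonneg hx n)
      have h5 : (∑ n ∈ range (N + 1), bS n * x ^ n) ^ 2 ≤ β ^ 2 := by nlinarith
      have h6 := mul_le_mul_of_nonneg_left h5 hx
      linarith

open Finset in
theorem partial_c {x β h : ℝ} (hx : 0 ≤ x) (hβ : 0 ≤ β) (hh : 0 ≤ h)
    (hfixb : x + x * β ^ 2 ≤ β) (hfix : β + x + x * h ^ 2 ≤ h) :
    ∀ M, ∑ n ∈ range M, cS n * x ^ n ≤ h := by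
  intro M
  induction M using Nat.strong_induction_on with
  | _ M ih =>
    match M with
    | 0 => simpa using hh
    | 1 => simp [cS_zero, hh]
    | N + 2 =>
      have hsplit : ∑ n ∈ range (N + 2), cS n * x ^ n
          = ∑ n ∈ range (N + 2), bS n * x ^ n + ∑ n ∈ range (N + 2), aS n * x ^ n := by
        rw [← Finset.sum_add_distrib]
        exact Finset.sum_congr rfl fun n _ => by rw [cS]; ring
      have h1 := quad_partial aS cS aS_zero aS_one aS_rec cS_nonneg hx N
      have h2 := ih (N + 1) (by omega)
      have h3 : (0 : ℝ) ≤ ∑ n ∈ range (N + 1), cS n * x ^ n :=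
        Finset.sum_nonneg fun n _ => mul_nonneg (cS_nonneg n) (pow_nonneg hx n)
      have h4 := partial_b hx hβ hfixb (N + 2)
      have h5 : (∑ n ∈ range (N + 1), cS n * x ^ n) ^ 2 ≤ h ^ 2 := by nlinarith
      have h6 := mul_le_mul_of_nonneg_left h5 hx
      rw [hsplit]
      linarith

open Finset in
theorem tsum_quad (u d : ℕ → ℝ) (hu0 : u 0 = 0) (hu1 : u 1 = 1) (hd00 : d 0 = 0)
    (hrec : ∀ k, u (k + 2) = ∑ p ∈ antidiagonal (k + 1), d p.1 * d p.2)
    (hd : ∀ n, 0 ≤ d n) {x : ℝ} (hx : 0 ≤ x)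
    (hu : Summable fun n => u n * x ^ n) (hds : Summable fun n => d n * x ^ n) :
    ∑' n, u n * x ^ n = x + x * (∑' n, d n * x ^ n) ^ 2 := by
  let D : ℕ → ℝ := fun n => d n * x ^ n
  have hD : ∀ n, D n = d n * x ^ n := fun n => rfl
  have hDnn : ∀ n, 0 ≤ D n := fun n => mul_nonneg (hd n) (pow_nonneg hx n)
  have hDnorm : Summable fun n => ‖D n‖ := by
    refine hds.congr fun n => ?_
    rw [Real.norm_of_nonneg (hDnn n)]
  have hg : Summable fun m => ∑ p ∈ antidiagonal m, D p.1 * D p.2 :=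
    (summable_norm_sum_mul_antidiagonal_of_summable_norm hDnorm hDnorm).of_norm
  have hcauchy : (∑' n, D n) * (∑' n, D n) = ∑' m, ∑ p ∈ antidiagonal m, D p.1 * D p.2 :=
    tsum_mul_tsum_eq_tsum_sum_antidiagonal_of_summable_norm hDnorm hDnorm
  have hterm : ∀ k, u (k + 2) * x ^ (k + 2) = x * ∑ p ∈ antidiagonal (k + 1), D p.1 * D p.2 := by
    intro k
    rw [hrec, Finset.sum_mul, Finset.mul_sum]
    refine Finset.sum_congr rfl fun p hp => ?_
    rw [Finset.HasAntidiagonal.mem_antidiagonal] at hp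
    simp only [hD]
    rw [show k + 2 = p.1 + p.2 + 1 by omega, pow_succ, pow_add]
    ring
  have hstep1 : ∑' n, u n * x ^ n = x + ∑' k, u (k + 2) * x ^ (k + 2) := by
    rw [Summable.tsum_eq_zero_add hu, Summable.tsum_eq_zero_add ((summable_nat_add_iff 1).2 hu)]
    simp only [hu0, hu1, zero_mul, pow_one, one_mul, zero_add]
  have hg1 : Summable fun k => (∑ p ∈ antidiagonal (k + 1), D p.1 * D p.2) :=
    (summable_nat_add_iff (f := fun m => ∑ p ∈ antidiagonal m, D p.1 * D p.2) 1).2 hg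
  have hstep2 : ∑' k, u (k + 2) * x ^ (k + 2)
      = x * ∑' k, ∑ p ∈ antidiagonal (k + 1), D p.1 * D p.2 := by
    rw [← tsum_mul_left]
    exact tsum_congr hterm
  have hg0 : (∑ p ∈ antidiagonal 0, D p.1 * D p.2) = 0 := by
    simp [hD, hd00]
  have hstep3 : ∑' k, ∑ p ∈ antidiagonal (k + 1), D p.1 * D p.2 = (∑' n, D n) ^ 2 := by
    have := Summable.tsum_eq_zero_add hg
    rw [hg0, zero_add] at this
    rw [← this, ← hcauchy, sq]
  rw [hstep1, hstep2, hstep3]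

end PTree

namespace PTree

theorem sqrt3_sq : Real.sqrt 3 ^ 2 = 3 := Real.sq_sqrt (by norm_num)
theorem sqrt3_nonneg : 0 ≤ Real.sqrt 3 := Real.sqrt_nonneg 3
theorem sqrt3_lt_two : Real.sqrt 3 < 2 := by
  nlinarith [sqrt3_sq, sqrt3_nonneg]
theorem sqrt3_gt : (3:ℝ)/2 < Real.sqrt 3 := by
  nlinarith [sqrt3_sq, sqrt3_nonneg]

theorem rho_pos : 0 < Real.sqrt (2 * Real.sqrt 3 - 3) / 2 := by
  have h1 : (0:ℝ) < 2 * Real.sqrt 3 - 3 := by nlinarith [sqrt3_gt]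
  have := Real.sqrt_pos.2 h1
  linarith

theorem rho_sq : (Real.sqrt (2 * Real.sqrt 3 - 3) / 2) ^ 2 = (2 * Real.sqrt 3 - 3) / 4 := by
  have h1 : (0:ℝ) ≤ 2 * Real.sqrt 3 - 3 := by nlinarith [sqrt3_gt]
  rw [div_pow, Real.sq_sqrt h1]
  norm_num

/-- Summability at `ρ₁`. -/
theorem summable_at_rho :
    Summable fun n : ℕ => binRCoeff 1 n * (Real.sqrt (2 * Real.sqrt 3 - 3) / 2) ^ n := by
  set t := Real.sqrt 3 with hts
  set ρ := Real.sqrt (2 * Real.sqrt 3 - 3) / 2 with hρs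
  have ht2 : t ^ 2 = 3 := sqrt3_sq
  have hρpos : 0 < ρ := rho_pos
  have hρ4 : 4 * ρ ^ 2 = 2 * t - 3 := by rw [hρs, rho_sq]; ring
  set β : ℝ := (2 - t) / (2 * ρ) with hβs
  set h : ℝ := 1 / (2 * ρ) with hhs
  have hβ : 2 * ρ * β = 2 - t := by
    rw [hβs]; field_simp
  have hh : 2 * ρ * h = 1 := by
    rw [hhs]; field_simp
  have hβ0 : 0 ≤ β := by
    rw [hβs]
    apply div_nonneg _ (by linarith)
    nlinarith [sqrt3_lt_two]
  have hh0 : 0 ≤ h := by positivity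
  have hb2 : 4 * ρ ^ 2 * β ^ 2 = (2 - t) ^ 2 := by
    linear_combination (2 * ρ * β + 2 - t) * hβ
  have hh2 : 4 * ρ ^ 2 * h ^ 2 = 1 := by
    linear_combination (2 * ρ * h + 1) * hh
  have hfixb : ρ + ρ * β ^ 2 ≤ β := by
    have key : 4 * ρ * (β - (ρ + ρ * β ^ 2)) = 3 - t ^ 2 := by
      linear_combination 2 * hβ - hρ4 - hb2
    nlinarith [key, ht2, hρpos]
  have hfix : β + ρ + ρ * h ^ 2 ≤ h := by
    have key : 4 * ρ * (h - (β + ρ + ρ * h ^ 2)) = 0 := by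
      linear_combination 2 * hh - 2 * hβ - hρ4 - hh2
    nlinarith [key, hρpos]
  refine summable_of_sum_range_le (c := h) (fun n => ?_) (fun M => ?_)
  · exact mul_nonneg (aS_nonneg n) (pow_nonneg hρpos.le n)
  · calc ∑ n ∈ Finset.range M, binRCoeff 1 n * ρ ^ n
        ≤ ∑ n ∈ Finset.range M, cS n * ρ ^ n := by
          refine Finset.sum_le_sum fun n _ => ?_
          refine mul_le_mul_of_nonneg_right ?_ (pow_nonneg hρpos.le n)
          have := bS_nonneg n
          rw [cS]; show binRCoeff 1 n ≤ _; rw [show binRCoeff 1 n = aS n from rfl]; linarith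
      _ ≤ h := partial_c hρpos.le hβ0 hh0 hfixb hfix M

set_option maxHeartbeats 1000000 in
/-- Upper bound. -/
theorem le_rho_of_summable {x : ℝ} (hx : 0 ≤ x)
    (hsum : Summable fun n : ℕ => binRCoeff 1 n * x ^ n) :
    x ≤ Real.sqrt (2 * Real.sqrt 3 - 3) / 2 := by
  set t := Real.sqrt 3 with hts
  set ρ := Real.sqrt (2 * Real.sqrt 3 - 3) / 2 with hρs
  have ht2 : t ^ 2 = 3 := sqrt3_sq
  have ht0 : 0 ≤ t := sqrt3_nonneg
  have hρpos : 0 < ρ := rho_pos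
  have hρ4 : 4 * ρ ^ 2 = 2 * t - 3 := by rw [hρs, rho_sq]; ring
  rcases eq_or_lt_of_le hx with heq | hxpos
  · rw [← heq]; exact hρpos.le
  have ha : Summable fun n => aS n * x ^ n := hsum
  have hb : Summable fun n => bS n * x ^ n := by
    refine Summable.of_nonneg_of_le (fun n => mul_nonneg (bS_nonneg n) (pow_nonneg hx n))
      (fun n => mul_le_mul_of_nonneg_right (bS_le_aS n) (pow_nonneg hx n)) ha
  have hc : Summable fun n => cS n * x ^ n := by
    refine ((hb.add ha).congr fun n => ?_)
    rw [cS]; ring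
  set B := ∑' n, bS n * x ^ n with hBs
  set A := ∑' n, aS n * x ^ n with hAs
  set C := ∑' n, cS n * x ^ n with hCs
  have eqB : B = x + x * B ^ 2 := tsum_quad bS bS bS_zero bS_one bS_zero bS_rec bS_nonneg hx hb hb
  have eqA : A = x + x * C ^ 2 := tsum_quad aS cS aS_zero aS_one cS_zero aS_rec cS_nonneg hx ha hc
  have eqC : C = B + A := by
    rw [hCs, hBs, hAs, ← Summable.tsum_add hb ha]
    exact tsum_congr fun n => by rw [cS]; ring
  have Bnn : 0 ≤ B :=
    tsum_nonneg fun n => mul_nonneg (bS_nonneg n) (pow_nonneg hx n)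
  have e2 : 4 * x ^ 2 * B ^ 2 = 4 * x * B - 4 * x ^ 2 := by
    linear_combination (-4) * x * eqB
  have hs4 : 4 * x ^ 2 ≤ 1 := by
    nlinarith [sq_nonneg (2 * x * B - 1), e2]
  set s := Real.sqrt (1 - 4 * x ^ 2) with hss
  have hs2 : s ^ 2 = 1 - 4 * x ^ 2 := Real.sq_sqrt (by linarith)
  have hs0 : 0 ≤ s := Real.sqrt_nonneg _
  have hBlow : 1 - s ≤ 2 * x * B := by
    by_contra hcon
    push_neg at hcon
    nlinarith [hs2, hs0, e2]
  have e3 : 4 * x ^ 2 * C ^ 2 = 4 * x * C - 4 * x * B - 4 * x ^ 2 := by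
    linear_combination (-4) * x * eqA - 4 * x * eqC
  have hdisc : 4 * x * B + 4 * x ^ 2 ≤ 1 := by
    nlinarith [sq_nonneg (2 * x * C - 1), e3]
  have hs_ge : t - 1 ≤ s := by
    have h1 : 3 ≤ (s + 1) ^ 2 := by nlinarith [hBlow, hdisc, hs2]
    have h2 : t ≤ s + 1 := by
      rw [hts]
      calc Real.sqrt 3 ≤ Real.sqrt ((s + 1) ^ 2) := Real.sqrt_le_sqrt h1
        _ = s + 1 := Real.sqrt_sq (by linarith)
    linarith
  have hx2 : x ^ 2 ≤ ρ ^ 2 := by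
    have ht1 : 1 ≤ t := by nlinarith
    nlinarith [hs_ge, hs2, hρ4]
  nlinarith [hx2, hρpos, hxpos]

end PTree

/-- For full binary trees, `ρ_1 = √(2√3 − 3)/2`, and `ρ_1` satisfies
`16 ρ_1⁴ + 24 ρ_1² − 3 = 0`. -/
theorem binary_rho1_value :
    binRho1 = Real.sqrt (2 * Real.sqrt 3 - 3) / 2 ∧
    16 * binRho1 ^ 4 + 24 * binRho1 ^ 2 - 3 = 0 := by
  set ρ := Real.sqrt (2 * Real.sqrt 3 - 3) / 2 with hρs
  have hmem : ρ ∈ {x : ℝ | 0 ≤ x ∧ Summable fun n : ℕ => binRCoeff 1 n * x ^ n} :=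
    ⟨PTree.rho_pos.le, PTree.summable_at_rho⟩
  have hub : ρ ∈ upperBounds {x : ℝ | 0 ≤ x ∧ Summable fun n : ℕ => binRCoeff 1 n * x ^ n} :=
    fun y hy => PTree.le_rho_of_summable hy.1 hy.2
  have heq : binRho1 = ρ := by
    rw [binRho1]
    exact le_antisymm (csSup_le ⟨ρ, hmem⟩ hub) (le_csSup ⟨ρ, hub⟩ hmem)
  refine ⟨heq, ?_⟩
  rw [heq]
  have ht2 : Real.sqrt 3 ^ 2 = 3 := PTree.sqrt3_sq
  have hρ2 : ρ ^ 2 = (2 * Real.sqrt 3 - 3) / 4 := by rw [hρs]; exact PTree.rho_sq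
  linear_combination (16 * ρ ^ 2 + 8 * Real.sqrt 3 + 12) * hρ2 + 4 * ht2
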